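/- In any stable two-color (bipartite) partial matching between sets U and V in R^d, suppose all points of U in an interval [a,b] ⊂ R (d = 1) have partners at distance greater than t where b − a ≤ t, and a, b ∈ U are both matched at distance > t. Then every point of V in [a,b] is matched to a point of U in [a,b]. -/

import Mathlib

open scoped ENNReal

/-- Distance from `x` to its partner under a partial matching `m`; `∞` if unmatched. -/
noncomputable def partnerEDist {E : Type*} [PseudoEMetricSpace E]
    (m : E → Option E) (x : E) : ℝ≥0∞ :=
  match m x with
  | some y => edist x y
  | none => ⊤

/-- `m` is a partial matching of the set `U`. -/
def IsPartialMatching {E : Type*} (U : Set E) (m : E → Option E) : Prop :=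
  (∀ x, x ∉ U → m x = none) ∧
  ∀ x ∈ U, ∀ y, m x = some y → y ∈ U ∧ y ≠ x ∧ m y = some x

/-- `m` is a stable matching of `U`. -/
def IsStableMatching {E : Type*} [PseudoEMetricSpace E] (U : Set E) (m : E → Option E) : Prop :=
  ∀ x ∈ U, ∀ y ∈ U, x ≠ y →
    ¬ (edist x y < min (partnerEDist m x) (partnerEDist m y))

/-- `U` is discrete (locally finite). -/
def DiscreteSet {E : Type*} [PseudoMetricSpace E] (U : Set E) : Prop :=
  ∀ (p : E) (r : ℝ), (U ∩ Metric.ball p r).Finite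

/-- `U` is non-equidistant: no two distinct unordered pairs realize the same
positive distance. -/
def NonEquidistant {E : Type*} [PseudoMetricSpace E] (U : Set E) : Prop :=
  ¬ ∃ w ∈ U, ∃ x ∈ U, ∃ y ∈ U, ∃ z ∈ U,
      ({w, x} : Set E) ≠ {y, z} ∧ dist w x = dist y z ∧ 0 < dist w x

/-- `U` has no descending chains. -/
def NoDescendingChain {E : Type*} [PseudoMetricSpace E] (U : Set E) : Prop :=
  ¬ ∃ x : ℕ → E, (∀ n, x n ∈ U) ∧ StrictAnti (fun n => dist (x n) (x (n + 1)))

/-- `m` is a bipartite partial matching between `U` and `V`. -/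
def IsBipartiteMatching {E : Type*} (U V : Set E) (m : E → Option E) : Prop :=
  (∀ x, x ∉ U ∪ V → m x = none) ∧
  (∀ x ∈ U, ∀ y, m x = some y → y ∈ V ∧ m y = some x) ∧
  (∀ x ∈ V, ∀ y, m x = some y → y ∈ U ∧ m y = some x)

/-- A bipartite matching between `U` and `V` is stable if no `x ∈ U`, `y ∈ V`
both prefer each other to their current partners. -/
def IsBipartiteStable {E : Type*} [PseudoEMetricSpace E] (U V : Set E) (m : E → Option E) : Prop :=
  ∀ x ∈ U, ∀ y ∈ V, ¬ (edist x y < min (partnerEDist m x) (partnerEDist m y))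

/-!
The endpoints `a, b ∈ U` are within `b - a ≤ t` of any `v ∈ V ∩ [a, b]` but matched farther
than `t` away, so they prefer `v` to their partners. Stability then forces `v` to be matched no
farther than `a` and no farther than `b`, which puts its partner inside `[a, b]`.
-/

section PartnerEDist

variable {E : Type*} [PseudoEMetricSpace E] {m : E → Option E} {x : E}

theorem partnerEDist_of_eq_some {y : E} (h : m x = some y) : partnerEDist m x = edist x y := by
  simp [partnerEDist, h]

theorem exists_eq_some_of_partnerEDist_ne_top (h : partnerEDist m x ≠ ⊤) :
    ∃ y, m x = some y ∧ partnerEDist m x = edist x y := by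
  cases hx : m x with
  | none => simp [partnerEDist, hx] at h
  | some y => exact ⟨y, rfl, partnerEDist_of_eq_some hx⟩

theorem IsBipartiteStable.partnerEDist_le {U V : Set E} (hms : IsBipartiteStable U V m)
    {u v : E} (hu : u ∈ U) (hv : v ∈ V) (h : edist u v < partnerEDist m u) :
    partnerEDist m v ≤ edist u v :=
  not_lt.mp fun h' => hms u hu v hv (lt_min h h')

end PartnerEDist

theorem Real.mem_Icc_of_dist_le_dist_endpoints {a b u v : ℝ} (hv : v ∈ Set.Icc a b)
    (hua : dist v u ≤ dist a v) (hub : dist v u ≤ dist b v) : u ∈ Set.Icc a b := by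
  rw [Real.dist_eq, Real.dist_eq, abs_sub_comm a v, abs_of_nonneg (sub_nonneg.2 hv.1)] at hua
  rw [Real.dist_eq, Real.dist_eq, abs_of_nonneg (sub_nonneg.2 hv.2)] at hub
  have := abs_sub_le_iff.mp hua
  have := abs_sub_le_iff.mp hub
  constructor <;> linarith

theorem stable_bipartite_interval_general (U V : Set ℝ)
    (m : ℝ → Option ℝ)
    (hm : IsBipartiteMatching U V m) (hms : IsBipartiteStable U V m)
    (t a b : ℝ) (hlen : b - a ≤ t)
    (ha : a ∈ U) (hb : b ∈ U)
    (hbad : ∀ x ∈ U, x ∈ Set.Icc a b → ENNReal.ofReal t < partnerEDist m x) :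
    ∀ v ∈ V, v ∈ Set.Icc a b → ∃ u ∈ U, u ∈ Set.Icc a b ∧ m v = some u := by
  intro v hv hvab
  have hab : a ≤ b := hvab.1.trans hvab.2
  have hclose : ∀ c ∈ U, c ∈ Set.Icc a b → partnerEDist m v ≤ edist c v := fun c hc hcab =>
    hms.partnerEDist_le hc hv <|
      ((edist_le_ofReal (by linarith)).mpr
        ((Real.dist_le_of_mem_Icc hcab hvab).trans hlen)).trans_lt (hbad c hc hcab)
  have hva := hclose a ha ⟨le_rfl, hab⟩
  have hvb := hclose b hb ⟨hab, le_rfl⟩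
  obtain ⟨u, hmv, hvu⟩ :=
    exists_eq_some_of_partnerEDist_ne_top (ne_top_of_le_ne_top (edist_ne_top a v) hva)
  rw [hvu, edist_dist, edist_dist, ENNReal.ofReal_le_ofReal_iff dist_nonneg] at hva hvb
  exact ⟨u, (hm.2.2 v hv u hmv).1, Real.mem_Icc_of_dist_le_dist_endpoints hvab hva hvb, hmv⟩

/-- In a stable bipartite matching on `ℝ`: if `a ≤ b` with `b - a ≤ t`, all points of
`U` in `[a,b]` (in particular `a` and `b` themselves) are matched at distance `> t`,
then every point of `V` in `[a,b]` is matched to a point of `U` in `[a,b]`. -/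
theorem stable_bipartite_interval (U V : Set ℝ) (hUV : Disjoint U V)
    (h1 : DiscreteSet (U ∪ V)) (h2 : NonEquidistant (U ∪ V))
    (m : ℝ → Option ℝ)
    (hm : IsBipartiteMatching U V m) (hms : IsBipartiteStable U V m)
    (t a b : ℝ) (ht : 0 < t) (hab : a ≤ b) (hlen : b - a ≤ t)
    (ha : a ∈ U) (hb : b ∈ U)
    (hbad : ∀ x ∈ U, x ∈ Set.Icc a b → ENNReal.ofReal t < partnerEDist m x) :
    ∀ v ∈ V, v ∈ Set.Icc a b → ∃ u ∈ U, u ∈ Set.Icc a b ∧ m v = some u :=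
  stable_bipartite_interval_general U V m hm hms t a b hlen ha hb hbad
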